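/- arXiv:0807.3102 — 2 statements merged into one kernel-verified Lean document; each statement's English description precedes it below -/
import Mathlib

section
/- Let S be a Hausdorff countably compact topological semigroup. Then the Clifford part H(S) is sequentially closed in S. -/
open Filter Topology

variable {S : Type*}

/-- `spow x n` is `x ^ n` for `n ≥ 1` in a semigroup (with junk value `x` at `0`). -/
def spow {S : Type*} [Mul S] (x : S) : ℕ → S
  | 0 => x
  | 1 => x
  | n + 2 => spow x (n + 1) * x

/-- An element of a topological semigroup is topologically periodic if every open
neighbourhood of `x` contains `x ^ n` for some `n ≥ 2`. -/
def TopPeriodic {S : Type*} [Mul S] [TopologicalSpace S] (x : S) : Prop :=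
  ∀ U : Set S, IsOpen U → x ∈ U → ∃ n : ℕ, 2 ≤ n ∧ spow x n ∈ U

/-- The Clifford part `H(S)` of a semigroup: the union of all maximal subgroups. -/
def HSet (S : Type*) [Mul S] : Set S :=
  {x | ∃ y, x * y = y * x ∧ x * y * x = x ∧ y * x * y = y}

/-- The maximal subgroup `H(e)` of a semigroup with identity the idempotent `e`. -/
def Hgrp (S : Type*) [Mul S] (e : S) : Set S :=
  {x | ∃ y, x * y = e ∧ y * x = e ∧ x * e = x ∧ e * x = x ∧ y * e = y ∧ e * y = y}

/-- `inv` is the inversion map on the Clifford part `H(S)`: it sends each element of a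
maximal subgroup to its (unique) commuting inverse. -/
def IsInvMap (S : Type*) [Mul S] (inv : S → S) : Prop :=
  ∀ x ∈ HSet S, x * inv x = inv x * x ∧ x * inv x * x = x ∧ inv x * x * inv x = inv x

/-- A topological space is countably compact if every countable open cover admits a
finite subcover. -/
def CountablyCompactSpace' (X : Type*) [TopologicalSpace X] : Prop :=
  ∀ U : ℕ → Set X, (∀ n, IsOpen (U n)) → (⋃ n, U n) = Set.univ →
    ∃ F : Finset ℕ, (⋃ n ∈ F, U n) = Set.univ

/-- A subset of a topological space is countably compact (as a subspace) if every
countable cover by open sets of the ambient space admits a finite subcover. -/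
def CountablyCompactIn {X : Type*} [TopologicalSpace X] (A : Set X) : Prop :=
  ∀ U : ℕ → Set X, (∀ n, IsOpen (U n)) → A ⊆ ⋃ n, U n →
    ∃ F : Finset ℕ, A ⊆ ⋃ n ∈ F, U n

/-- A topological space is pseudocompact if every continuous real-valued function on it
is bounded. -/
def Pseudocompact (X : Type*) [TopologicalSpace X] : Prop :=
  ∀ f : X → ℝ, Continuous f → ∃ M : ℝ, ∀ x, |f x| ≤ M

/-! `H(S)` is the first projection of the set of pairs `(x, y)` with `xy = yx`, `xyx = x`,
`yxy = y`, which is closed in `S × S` since multiplication is continuous and `S` is Hausdorff.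
Projecting a closed set along a countably compact factor yields a sequentially closed set: if
`x n → x` with `(x n, y n)` in the closed set, the `y n` have a cluster point `y`, and `(x, y)`
is then a cluster point of the sequence of pairs, hence lies in the closed set. -/

theorem countablyCompactSpace_of_countablyCompactSpace' {X : Type*} [TopologicalSpace X]
    (h : CountablyCompactSpace' X) : CountablyCompactSpace X :=
  isCountablyCompact_univ_iff.mp <| isCountablyCompact_iff_countable_open_cover.mpr
    fun U hU hcover => (h U hU (Set.univ_subset_iff.mp hcover)).imp
      fun _ hF => (Set.univ_subset_iff.mpr hF)

theorem Filter.Tendsto.mapClusterPt_prodMk {α X Y : Type*} [TopologicalSpace X]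
    [TopologicalSpace Y] {l : Filter α} {u : α → X} {v : α → Y} {x : X} {y : Y}
    (hu : Tendsto u l (𝓝 x)) (hv : MapClusterPt y l v) :
    MapClusterPt (x, y) l (fun a => (u a, v a)) := by
  rw [mapClusterPt_iff_ultrafilter] at hv ⊢
  obtain ⟨U, hUl, hvU⟩ := hv
  exact ⟨U, hUl, (hu.mono_left hUl).prodMk_nhds hvU⟩

theorem IsClosed.isSeqClosed_image_fst {X Y : Type*} [TopologicalSpace X] [TopologicalSpace Y]
    [CountablyCompactSpace Y] {C : Set (X × Y)} (hC : IsClosed C) :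
    IsSeqClosed (Prod.fst '' C) := by
  intro u x hu hux
  choose v hv using hu
  obtain ⟨y, -, hy⟩ := CountablyCompactSpace.isCountablyCompact_univ.seq_clusterPt
    (fun n => (v n).2) (Eventually.of_forall fun _ => Set.mem_univ _)
  have hclust : MapClusterPt (x, y) atTop v := by
    simpa only [← (hv _).2] using hux.mapClusterPt_prodMk hy
  exact ⟨(x, y), hC.mem_of_mapClusterPt hclust (Eventually.of_forall fun n => (hv n).1), rfl⟩

def inversePairs (S : Type*) [Mul S] : Set (S × S) :=
  {p | p.1 * p.2 = p.2 * p.1 ∧ p.1 * p.2 * p.1 = p.1 ∧ p.2 * p.1 * p.2 = p.2}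

theorem hSet_eq_image_fst_inversePairs (S : Type*) [Mul S] :
    HSet S = Prod.fst '' inversePairs S := by
  ext x
  exact ⟨fun ⟨y, hy⟩ => ⟨(x, y), hy, rfl⟩, fun ⟨⟨_, y⟩, hy, hx⟩ => hx ▸ ⟨y, hy⟩⟩

theorem isClosed_inversePairs (S : Type*) [Mul S] [TopologicalSpace S] [ContinuousMul S]
    [T2Space S] : IsClosed (inversePairs S) := by
  refine (isClosed_eq ?_ ?_).inter ((isClosed_eq ?_ ?_).inter (isClosed_eq ?_ ?_)) <;> fun_prop

theorem stmt11 [Semigroup S] [TopologicalSpace S] [ContinuousMul S] [T2Space S]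
    (hcc : CountablyCompactSpace' S) :
    IsSeqClosed (HSet S) := by
  have := countablyCompactSpace_of_countablyCompactSpace' hcc
  rw [hSet_eq_image_fst_inversePairs]
  exact (isClosed_inversePairs S).isSeqClosed_image_fst
end

section
/- Let S be a topologically periodic Hausdorff countably compact topological semigroup which is inversely regular. Then the inversion inv : H(S) → H(S) is continuous. -/
open Filter Topology

variable {S : Type*}

section Aux

variable {S : Type*} [Semigroup S]

/-- `b` is a commuting inverse of `a`. -/
def CInv (a b : S) : Prop := a * b = b * a ∧ a * b * a = a ∧ b * a * b = b

theorem CInv.symm {a b : S} (h : CInv a b) : CInv b a :=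
  ⟨h.1.symm, h.2.2, h.2.1⟩

theorem cinv_unique {x a b : S} (ha : CInv x a) (hb : CInv x b) : a = b := by
  obtain ⟨ha1, ha2, ha3⟩ := ha
  obtain ⟨hb1, hb2, hb3⟩ := hb
  have hxg : x * (x * b) = x := by
    rw [hb1, ← mul_assoc]; exact hb2
  have hfg : x * b = x * a := by
    have h1 : x * a * (x * b) = x * b := by rw [← mul_assoc, ha2]
    have h2 : x * a * (x * b) = x * a := by
      rw [ha1, mul_assoc a x (x*b), hxg, ← ha1]
    rw [← h1, h2]
  calc a = a * x * a := ha3.symm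
    _ = a * (x * a) := by rw [mul_assoc]
    _ = a * (x * b) := by rw [← hfg]
    _ = a * x * b := by rw [mul_assoc]
    _ = x * a * b := by rw [ha1]
    _ = x * b * b := by rw [hfg]
    _ = b * x * b := by rw [hb1]
    _ = b := hb3

theorem spow_zero (x : S) : spow x 0 = x := rfl
theorem spow_one (x : S) : spow x 1 = x := rfl

theorem spow_succ (x : S) (n : ℕ) (hn : 1 ≤ n) : spow x (n + 1) = spow x n * x := by
  obtain ⟨m, rfl⟩ : ∃ m, n = m + 1 := ⟨n - 1, (Nat.succ_pred_eq_of_pos hn).symm⟩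
  rfl

theorem mul_spow_comm (x : S) (n : ℕ) (hn : 1 ≤ n) : x * spow x n = spow x n * x := by
  induction n, hn using Nat.le_induction with
  | base => rfl
  | succ n hn ih => rw [spow_succ x n hn, ← mul_assoc, ih]

theorem spow_succ' (x : S) (n : ℕ) (hn : 1 ≤ n) : spow x (n + 1) = x * spow x n := by
  rw [spow_succ x n hn, ← mul_spow_comm x n hn]

theorem spow_idem {e : S} (he : e * e = e) : ∀ k, spow e k = e
  | 0 => rfl
  | 1 => rfl
  | (k + 2) => by
      rw [show spow e (k + 2) = spow e (k + 1) * e from rfl, spow_idem he (k + 1), he]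

namespace CInv

variable {x y : S} (h : CInv x y)
include h

theorem e_mul_x : (x * y) * x = x := h.2.1
theorem x_mul_e : x * (x * y) = x := by rw [h.1, ← mul_assoc]; exact h.2.1
theorem e_mul_y : (x * y) * y = y := by rw [h.1]; exact h.2.2
theorem y_mul_e : y * (x * y) = y := by rw [← mul_assoc]; exact h.2.2
theorem e_idem : (x * y) * (x * y) = x * y := by rw [← mul_assoc, h.2.1]

theorem e_mul_spow (n : ℕ) (hn : 1 ≤ n) : (x * y) * spow x n = spow x n := by
  induction n, hn using Nat.le_induction with
  | base => exact h.e_mul_x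
  | succ n hn ih => rw [spow_succ x n hn, ← mul_assoc, ih]

theorem spow_mul_e (n : ℕ) (hn : 1 ≤ n) : spow x n * (x * y) = spow x n := by
  induction n, hn using Nat.le_induction with
  | base => exact h.x_mul_e
  | succ n hn ih => rw [spow_succ x n hn, mul_assoc, h.x_mul_e]

theorem y_mul_spow (n : ℕ) (hn : 1 ≤ n) : y * spow x (n + 1) = spow x n := by
  rw [spow_succ' x n hn, ← mul_assoc, ← h.1, h.e_mul_spow n hn]

theorem spow_mul_spow (n : ℕ) (hn : 1 ≤ n) :
    spow x n * spow y n = x * y ∧ spow y n * spow x n = x * y := by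
  induction n, hn using Nat.le_induction with
  | base => exact ⟨rfl, h.1.symm⟩
  | succ n hn ih =>
    constructor
    · rw [spow_succ' x n hn, spow_succ y n hn, mul_assoc, ← mul_assoc (spow x n), ih.1,
        h.e_mul_y]
    · rw [spow_succ' y n hn, spow_succ x n hn, mul_assoc, ← mul_assoc (spow y n), ih.2,
        h.e_mul_x]
      exact h.1.symm

theorem spow_cinv (n : ℕ) (hn : 1 ≤ n) : CInv (spow x n) (spow y n) := by
  obtain ⟨h1, h2⟩ := h.spow_mul_spow n hn
  refine ⟨h1.trans h2.symm, ?_, ?_⟩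
  · rw [h1, h.e_mul_spow n hn]
  · rw [h2, h.1]
    exact (h.symm).e_mul_spow n hn

theorem key_id (n : ℕ) (hn : 1 ≤ n) : spow y (n + 1) * spow x n = y := by
  rw [spow_succ' y n hn, mul_assoc, (h.spow_mul_spow n hn).2, h.y_mul_e]

end CInv

section InvMap

variable {inv : S → S} (hinv : IsInvMap S inv)
include hinv

theorem hCInv {x : S} (hx : x ∈ HSet S) : CInv x (inv x) := hinv x hx

theorem inv_memH {x : S} (hx : x ∈ HSet S) : inv x ∈ HSet S :=
  ⟨x, (hCInv hinv hx).symm⟩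

theorem inv_invol {x : S} (hx : x ∈ HSet S) : inv (inv x) = x :=
  cinv_unique (hCInv hinv (inv_memH hinv hx)) ((hCInv hinv hx).symm)

theorem spow_memH {x : S} (hx : x ∈ HSet S) {n : ℕ} (hn : 1 ≤ n) : spow x n ∈ HSet S :=
  ⟨spow (inv x) n, (hCInv hinv hx).spow_cinv n hn⟩

theorem inv_spow {x : S} (hx : x ∈ HSet S) {n : ℕ} (hn : 1 ≤ n) :
    inv (spow x n) = spow (inv x) n :=
  cinv_unique (hCInv hinv (spow_memH hinv hx hn)) ((hCInv hinv hx).spow_cinv n hn)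

theorem img_subset_H (A : Set S) : inv '' (A ∩ HSet S) ⊆ HSet S := by
  rintro b ⟨d, ⟨-, hdH⟩, rfl⟩
  exact inv_memH hinv hdH

theorem mem_img_of {A : Set S} {b : S} (hb : b ∈ HSet S) (hbA : inv b ∈ A) :
    b ∈ inv '' (A ∩ HSet S) :=
  ⟨inv b, ⟨hbA, inv_memH hinv hb⟩, inv_invol hinv hb⟩

theorem of_mem_img {A : Set S} {b : S} (hb : b ∈ inv '' (A ∩ HSet S)) :
    b ∈ HSet S ∧ inv b ∈ A := by
  obtain ⟨d, ⟨hdA, hdH⟩, rfl⟩ := hb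
  exact ⟨inv_memH hinv hdH, (inv_invol hinv hdH).symm ▸ hdA⟩

end InvMap

section Top

variable [TopologicalSpace S] [ContinuousMul S]

theorem continuous_spow : ∀ n : ℕ, Continuous fun z : S => spow z n
  | 0 => continuous_id
  | 1 => continuous_id
  | (n + 2) => by
      have : (fun z : S => spow z (n + 2)) = fun z => spow z (n + 1) * z := rfl
      rw [this]
      exact (continuous_spow (n + 1)).mul continuous_id

/-- Lemma A : the inverse of `x` lies in the closure of the positive powers of `x`. -/
theorem lemmaA {inv : S → S} (hinv : IsInvMap S inv) (hper : ∀ x : S, TopPeriodic x)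
    {x : S} (hx : x ∈ HSet S) :
    inv x ∈ closure {s : S | ∃ n, 1 ≤ n ∧ spow x n = s} := by
  set y := inv x with hy
  have h : CInv x y := hCInv hinv hx
  set Q : Set S := {s : S | ∃ n, 1 ≤ n ∧ spow x n = s} with hQ
  set P : Set S := {s : S | ∃ n, 2 ≤ n ∧ spow x n = s} with hP
  have hxP : x ∈ closure P := by
    rw [mem_closure_iff]
    intro o ho hxo
    obtain ⟨n, hn, hmem⟩ := hper x o ho hxo
    exact ⟨spow x n, hmem, n, hn, rfl⟩
  have heQ : y * x ∈ closure Q := by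
    have hcont : Continuous fun s : S => y * s := continuous_const.mul continuous_id
    have h1 : y * x ∈ closure ((fun s => y * s) '' P) := by
      have := image_closure_subset_closure_image (s := P) hcont
      exact this ⟨x, hxP, rfl⟩
    refine closure_mono ?_ h1
    rintro - ⟨-, ⟨n, hn, rfl⟩, rfl⟩
    obtain ⟨m, rfl⟩ : ∃ m, n = m + 1 := ⟨n - 1, (Nat.succ_pred_eq_of_pos (by omega)).symm⟩
    exact ⟨m, by omega, (h.y_mul_spow m (by omega)).symm⟩
  have hyQ : y ∈ closure Q := by
    have hcont : Continuous fun s : S => y * (y * s) :=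
      continuous_const.mul (continuous_const.mul continuous_id)
    have h1 : y * (y * x) ∈ closure ((fun s => y * (y * s)) '' P) := by
      have := image_closure_subset_closure_image (s := P) hcont
      exact this ⟨x, hxP, rfl⟩
    have h2 : y * (y * x) = y := by rw [← h.1, h.y_mul_e]
    rw [h2] at h1
    have h3 : closure ((fun s => y * (y * s)) '' P) ⊆ closure Q := by
      rw [← closure_closure (s := Q)]
      refine closure_mono ?_
      rintro - ⟨-, ⟨n, hn, rfl⟩, rfl⟩
      obtain ⟨m, rfl⟩ : ∃ m, n = m + 1 := ⟨n - 1, (Nat.succ_pred_eq_of_pos (by omega)).symm⟩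
      show y * (y * spow x (m + 1)) ∈ closure Q
      rw [h.y_mul_spow m (by omega)]
      rcases Nat.lt_or_ge m 2 with hm | hm
      · interval_cases m
        · exact absurd hn (by omega)
        · exact heQ
      · obtain ⟨k, rfl⟩ : ∃ k, m = k + 1 := ⟨m - 1, by omega⟩
        rw [h.y_mul_spow k (by omega)]
        exact subset_closure ⟨k, by omega, rfl⟩
    exact h3 h1
  exact hyQ

end Top

theorem exists_chain {α : Type*} (P : α → Prop) (R : ℕ → α → α → Prop) (a0 : α) (h0 : P a0)
    (hstep : ∀ n a, P a → ∃ b, P b ∧ R n a b) :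
    ∃ f : ℕ → α, f 0 = a0 ∧ (∀ n, P (f n)) ∧ ∀ n, R (n + 1) (f n) (f (n + 1)) := by
  choose g hg1 hg2 using hstep
  let F : ℕ → {a : α // P a} := fun n =>
    Nat.rec ⟨a0, h0⟩ (fun j p => ⟨g (j + 1) p.1 p.2, hg1 (j + 1) p.1 p.2⟩) n
  exact ⟨fun n => (F n).1, rfl, fun n => (F n).2, fun n => hg2 (n + 1) (F n).1 (F n).2⟩

theorem ccc_inter [TopologicalSpace S] (hcc : CountablyCompactSpace' S)
    {C : ℕ → Set S} (hcl : ∀ n, IsClosed (C n)) (hne : ∀ n, (C n).Nonempty)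
    (hdec : ∀ n, C (n + 1) ⊆ C n) : (⋂ n, C n).Nonempty := by
  have hmono : ∀ i j : ℕ, i ≤ j → C j ⊆ C i := by
    intro i j hij
    induction j, hij using Nat.le_induction with
    | base => exact subset_rfl
    | succ j hij ih => exact (hdec j).trans ih
  by_contra hempty
  rw [Set.not_nonempty_iff_eq_empty] at hempty
  have hcover : (⋃ n, (C n)ᶜ) = Set.univ := by
    rw [← Set.compl_iInter, hempty, Set.compl_empty]
  obtain ⟨F, hF⟩ := hcc _ (fun n => (hcl n).isOpen_compl) hcover
  obtain ⟨z, hz⟩ := hne (F.sup id)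
  have hz2 : z ∈ ⋃ n ∈ F, (C n)ᶜ := hF ▸ Set.mem_univ z
  simp only [Set.mem_iUnion, Set.mem_compl_iff] at hz2
  obtain ⟨n, hnF, hzn⟩ := hz2
  exact hzn (hmono n (F.sup id) (Finset.le_sup (f := id) hnF) hz)

set_option linter.unusedSectionVars false

theorem cont_at_idem [TopologicalSpace S] [ContinuousMul S]
    (hper : ∀ x : S, TopPeriodic x) (hcc : CountablyCompactSpace' S)
    {inv : S → S} (hinv : IsInvMap S inv)
    (hreg : ∀ e : S, e * e = e → ∀ U : Set S, IsOpen U → e ∈ U →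
      ∃ W : Set S, IsOpen W ∧ e ∈ W ∧
        closure (inv '' (W ∩ HSet S)) ⊆ inv '' (U ∩ HSet S))
    {e : S} (he : e * e = e) {G : Set S} (hGo : IsOpen G) (heG : e ∈ G) :
    ∃ W : Set S, IsOpen W ∧ e ∈ W ∧ ∀ w ∈ W ∩ HSet S, inv w ∈ G := by
  by_contra hcon
  push_neg at hcon
  -- build the chain of neighbourhoods
  have hstep : ∀ (N : ℕ) (V : Set S), (IsOpen V ∧ e ∈ V) →
      ∃ V', (IsOpen V' ∧ e ∈ V') ∧
        (V' ⊆ V ∧ closure (inv '' (V' ∩ HSet S)) ⊆ inv '' (V ∩ HSet S) ∧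
          ∀ k, 1 ≤ k → k ≤ N → ∀ z ∈ V', spow z k ∈ V) := by
    intro N V hV
    obtain ⟨W, hWo, heW, hWcl⟩ := hreg e he V hV.1 hV.2
    set T : Set S := ⋂ k ∈ Finset.range (N + 1), {z : S | spow z k ∈ V} with hT
    have hTo : IsOpen T := by
      refine isOpen_biInter_finset fun k _ => ?_
      exact (continuous_spow k).isOpen_preimage V hV.1
    have heT : e ∈ T := by
      refine Set.mem_biInter fun k _ => ?_
      show spow e k ∈ V
      rw [spow_idem he k]
      exact hV.2
    refine ⟨W ∩ T ∩ V, ⟨((hWo.inter hTo).inter hV.1), ⟨⟨heW, heT⟩, hV.2⟩⟩,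
      Set.inter_subset_right, ?_, ?_⟩
    · refine (closure_mono (Set.image_mono ?_)).trans hWcl
      exact Set.inter_subset_inter_left _ ((Set.inter_subset_left).trans Set.inter_subset_left)
    · intro k hk1 hkN z hz
      have := hz.1.2
      rw [hT] at this
      exact Set.mem_iInter₂.mp this k (Finset.mem_range.mpr (by omega))
  obtain ⟨Vs, hVs0, hVsP, hVsR⟩ := exists_chain (fun V : Set S => IsOpen V ∧ e ∈ V)
    (fun N V V' => V' ⊆ V ∧ closure (inv '' (V' ∩ HSet S)) ⊆ inv '' (V ∩ HSet S) ∧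
      ∀ k, 1 ≤ k → k ≤ N → ∀ z ∈ V', spow z k ∈ V) G ⟨hGo, heG⟩ hstep
  have hmono : ∀ i j : ℕ, i ≤ j → Vs j ⊆ Vs i := by
    intro i j hij
    induction j, hij using Nat.le_induction with
    | base => exact subset_rfl
    | succ j hij ih => exact ((hVsR j).1).trans ih
  -- the bad witnesses
  have hbad : ∀ j : ℕ, ∃ v, v ∈ Vs j ∩ HSet S ∧ inv v ∉ G := by
    intro j
    obtain ⟨v, hv1, hv2⟩ := hcon (Vs j) (hVsP j).1 (hVsP j).2
    exact ⟨v, hv1, hv2⟩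
  choose v hv hvG using hbad
  set b : ℕ → S := fun j => inv (v j) with hb
  -- cluster point
  set C : ℕ → Set S := fun j => closure {s : S | ∃ m, j ≤ m ∧ b m = s} with hC
  obtain ⟨β, hβ⟩ : (⋂ n, C n).Nonempty := by
    refine ccc_inter hcc (fun n => isClosed_closure) (fun n => ⟨b n, subset_closure ⟨n, le_refl n, rfl⟩⟩) ?_
    intro n
    exact closure_mono (by rintro - ⟨m, hm, rfl⟩; exact ⟨m, by omega, rfl⟩)
  have hβC : ∀ j, β ∈ C j := fun j => Set.mem_iInter.mp hβ j
  -- β avoids G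
  have hβG : β ∉ G := by
    have : C 0 ⊆ Gᶜ := by
      refine closure_minimal ?_ hGo.isClosed_compl
      rintro - ⟨m, -, rfl⟩
      exact hvG m
    exact this (hβC 0)
  -- β is in all the images
  have hβj : ∀ j, β ∈ inv '' (Vs j ∩ HSet S) := by
    intro j
    refine (hVsR j).2.1 ?_
    refine closure_mono ?_ (hβC (j + 1))
    rintro - ⟨m, hm, rfl⟩
    show inv (v m) ∈ inv '' (Vs (j + 1) ∩ HSet S)
    refine mem_img_of hinv (inv_memH hinv (hv m).2) ?_
    rw [inv_invol hinv (hv m).2]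
    exact hmono (j + 1) m hm (hv m).1
  have hβH : β ∈ HSet S := (of_mem_img hinv (hβj 0)).1
  set γ : S := inv β with hγdef
  have hγVH : ∀ j, γ ∈ Vs j := fun j => (of_mem_img hinv (hβj j)).2
  have hγH : γ ∈ HSet S := inv_memH hinv hβH
  have hinvγ : inv γ = β := inv_invol hinv hβH
  have hpow : ∀ k, 1 ≤ k → ∀ j, spow γ k ∈ Vs j := by
    intro k hk j
    have h3 := (hVsR (max j k)).2.2 k hk (le_trans (le_max_right j k) (Nat.le_succ _))
      γ (hγVH (max j k + 1))
    exact hmono j (max j k) (le_max_left _ _) h3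
  have hpowimg : ∀ k, 1 ≤ k → ∀ j, spow β k ∈ inv '' (Vs j ∩ HSet S) := by
    intro k hk j
    refine mem_img_of hinv (spow_memH hinv hβH hk) ?_
    rw [inv_spow hinv hβH hk, ← hγdef]
    exact hpow k hk j
  have hγimg : γ ∈ inv '' (Vs 0 ∩ HSet S) := by
    refine (hVsR 0).2.1 (closure_mono ?_ (lemmaA hinv hper hβH))
    rintro - ⟨k, hk, rfl⟩
    exact hpowimg k hk 1
  refine hβG ?_
  obtain ⟨d, ⟨hdG, hdH⟩, hd⟩ := hγimg
  have hβd : β = d := by rw [← hinvγ, ← hd, inv_invol hinv hdH]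
  rw [hβd]
  exact hVs0 ▸ hdG


end Aux

theorem stmt17 [Semigroup S] [TopologicalSpace S] [ContinuousMul S] [T2Space S]
    (hper : ∀ x : S, TopPeriodic x)
    (hcc : CountablyCompactSpace' S)
    (inv : S → S) (hinv : IsInvMap S inv)
    (hreg : ∀ e : S, e * e = e → ∀ U : Set S, IsOpen U → e ∈ U →
      ∃ W : Set S, IsOpen W ∧ e ∈ W ∧
        closure (inv '' (W ∩ HSet S)) ⊆ inv '' (U ∩ HSet S)) :
    ContinuousOn inv (HSet S) := by
  intro x₀ hx₀
  have hmain : ∀ U : Set S, IsOpen U → inv x₀ ∈ U → inv ⁻¹' U ∈ 𝓝[HSet S] x₀ := by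
    intro U hUo hUm
    set y₀ : S := inv x₀ with hy₀
    have h : CInv x₀ y₀ := hCInv hinv hx₀
    set e₀ : S := x₀ * y₀ with he₀def
    have he₀ : e₀ * e₀ = e₀ := h.e_idem
    -- split U around e₀ * y₀ = y₀
    have hsplit : ∀ (a c : S) (T : Set S), IsOpen T → a * c ∈ T →
        ∃ A C : Set S, IsOpen A ∧ IsOpen C ∧ a ∈ A ∧ c ∈ C ∧
          ∀ g ∈ A, ∀ z ∈ C, g * z ∈ T := by
      intro a c T hTo hTm
      have hcm : Continuous fun p : S × S => p.1 * p.2 := continuous_mul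
      have h1 : (fun p : S × S => p.1 * p.2) ⁻¹' T ∈ 𝓝 (a, c) :=
        hcm.continuousAt.preimage_mem_nhds (hTo.mem_nhds hTm)
      obtain ⟨A, C, hA, haA, hC, hcC, hsub⟩ := mem_nhds_prod_iff'.mp h1
      exact ⟨A, C, hA, hC, haA, hcC, fun g hg z hz => hsub (Set.mk_mem_prod hg hz)⟩
    obtain ⟨G, A, hGo, hAo, heG, hyA, hGA⟩ := hsplit e₀ y₀ U hUo (by rw [h.e_mul_y]; exact hUm)
    obtain ⟨W, hWo, heW, hWG⟩ := cont_at_idem hper hcc hinv hreg he₀ hGo heG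
    obtain ⟨A', V₁, hA'o, hV₁o, hyA', hxV₁, hA'V₁⟩ := hsplit y₀ x₀ W hWo
      (by rw [← h.1]; exact heW)
    have hyAA' : y₀ ∈ A ∩ A' := ⟨hyA, hyA'⟩
    obtain ⟨-, hmemA, n, hn1, rfl⟩ := mem_closure_iff.mp (lemmaA hinv hper hx₀)
      (A ∩ A') (hAo.inter hA'o) hyAA'
    refine mem_nhdsWithin.mpr
      ⟨V₁ ∩ {z : S | spow z n ∈ A ∩ A'}, hV₁o.inter ((continuous_spow n).isOpen_preimage _
        (hAo.inter hA'o)), ⟨hxV₁, hmemA⟩, ?_⟩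
    rintro z ⟨⟨hzV₁, hzpow⟩, hzH⟩
    show inv z ∈ U
    have hz1 : spow z (n + 1) = spow z n * z := spow_succ z n hn1
    have hzW : spow z (n + 1) ∈ W := by rw [hz1]; exact hA'V₁ _ hzpow.2 z hzV₁
    have hzpH : spow z (n + 1) ∈ HSet S := spow_memH hinv hzH (by omega)
    have hG1 : inv (spow z (n + 1)) ∈ G := hWG _ ⟨hzW, hzpH⟩
    rw [inv_spow hinv hzH (by omega)] at hG1
    have hkey : spow (inv z) (n + 1) * spow z n = inv z := (hCInv hinv hzH).key_id n hn1
    rw [← hkey]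
    exact hGA _ hG1 _ hzpow.1
  exact tendsto_nhds.mpr hmain
end
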